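/- arXiv:2001.08083 — 2 statements merged into one kernel-verified Lean document; each statement's English description precedes it below -/
import Mathlib

section
/- Every matrix U of the form blockdiag(D(A¹), I) or blockdiag(I, D(A²)), where A¹ and A² are entrywise nonnegative column stochastic n×n matrices and I is the Tn×Tn identity, is non-expansive on the subspace W with respect to the norm ‖·‖; that is, for every z ∈ W, ‖Uz‖ ≤ ‖z‖. -/
noncomputable def l1 {n : ℕ} (z : Fin n → ℝ) : ℝ := ∑ i, |z i|

noncomputable def normT {n T : ℕ} (z : Fin T → Fin n → ℝ) : ℝ := ⨆ ℓ, l1 (z ℓ)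

/-- The action of the block matrix `D(A)` on a block vector `z ∈ ℝ^{Tn}`:
`(D(A)z)₁ = A z₁` and `(D(A)z)_r = (1/r)·A z₁ + ((r−1)/r)·z_{r−1}` for `r = 2,…,T`
(indices here are 0-based). -/
noncomputable def DApply {n T : ℕ} (A : Matrix (Fin n) (Fin n) ℝ)
    (z : Fin T → Fin n → ℝ) : Fin T → Fin n → ℝ :=
  fun r => (1 / ((r : ℕ) + 1) : ℝ) • A.mulVec (z ⟨0, r.pos⟩)
    + (((r : ℕ) : ℝ) / ((r : ℕ) + 1)) • z ⟨(r : ℕ) - 1, lt_of_le_of_lt (Nat.pred_le _) r.isLt⟩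

/-- The norm on pairs: `‖(y¹, y²)‖ = max{‖y¹‖_T, ‖y²‖_T}`. -/
noncomputable def normPair {n T : ℕ} (y : (Fin T → Fin n → ℝ) × (Fin T → Fin n → ℝ)) : ℝ :=
  max (normT y.1) (normT y.2)

/-!
A nonnegative matrix with column sums at most one does not increase the `ℓ¹` norm, and every
block `(D(A)z)_r = (1/r)·A z₁ + ((r−1)/r)·z_{r−1}` is a convex combination of `A z₁` and
`z_{r−1}`. Hence each block of `D(A)z` has `ℓ¹` norm at most `‖z‖_T`, and the identity block of
`U` leaves the other component unchanged.
-/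

lemma l1_nonneg {n : ℕ} (x : Fin n → ℝ) : 0 ≤ l1 x :=
  Finset.sum_nonneg fun i _ => abs_nonneg (x i)

lemma l1_smul_add_smul_le {n : ℕ} {a b : ℝ} (ha : 0 ≤ a) (hb : 0 ≤ b) (x y : Fin n → ℝ) :
    l1 (a • x + b • y) ≤ a * l1 x + b * l1 y := by
  simp only [l1, Finset.mul_sum, ← Finset.sum_add_distrib]
  refine Finset.sum_le_sum fun i _ => ?_
  calc |a * x i + b * y i| ≤ |a * x i| + |b * y i| := abs_add_le _ _
    _ = a * |x i| + b * |y i| := by rw [abs_mul, abs_mul, abs_of_nonneg ha, abs_of_nonneg hb]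

lemma l1_mulVec_le {m n : ℕ} {A : Matrix (Fin m) (Fin n) ℝ}
    (hA_nonneg : ∀ i j, 0 ≤ A i j) (hA_colSum : ∀ j, ∑ i, A i j ≤ 1) (x : Fin n → ℝ) :
    l1 (A.mulVec x) ≤ l1 x :=
  calc l1 (A.mulVec x) ≤ ∑ i, ∑ j, A i j * |x j| := Finset.sum_le_sum fun i _ =>
        calc |(A.mulVec x) i| ≤ ∑ j, |A i j * x j| :=
              Finset.abs_sum_le_sum_abs (fun j => A i j * x j) Finset.univ
          _ = ∑ j, A i j * |x j| := by simp only [abs_mul, abs_of_nonneg (hA_nonneg i _)]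
    _ = ∑ j, (∑ i, A i j) * |x j| := by rw [Finset.sum_comm]; simp only [Finset.sum_mul]
    _ ≤ l1 x := Finset.sum_le_sum fun j _ => mul_le_of_le_one_left (abs_nonneg _) (hA_colSum j)

lemma l1_le_normT {n T : ℕ} (z : Fin T → Fin n → ℝ) (ℓ : Fin T) : l1 (z ℓ) ≤ normT z :=
  le_ciSup (f := fun ℓ => l1 (z ℓ)) (Set.finite_range _).bddAbove ℓ

lemma normT_nonneg {n T : ℕ} (z : Fin T → Fin n → ℝ) : 0 ≤ normT z :=
  Real.iSup_nonneg fun ℓ => l1_nonneg (z ℓ)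

lemma normT_DApply_le {n T : ℕ} {A : Matrix (Fin n) (Fin n) ℝ}
    (hA_nonneg : ∀ i j, 0 ≤ A i j) (hA_colSum : ∀ j, ∑ i, A i j ≤ 1) (z : Fin T → Fin n → ℝ) :
    normT (DApply A z) ≤ normT z := by
  refine Real.iSup_le (fun r => ?_) (normT_nonneg z)
  have hweights : 1 / ((r : ℕ) + 1 : ℝ) + (r : ℕ) / ((r : ℕ) + 1) = 1 := by
    rw [← add_div, add_comm]; exact div_self (by positivity)
  calc l1 (DApply A z r) ≤ _ := l1_smul_add_smul_le (by positivity) (by positivity) _ _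
    _ ≤ 1 / ((r : ℕ) + 1 : ℝ) * normT z + (r : ℕ) / ((r : ℕ) + 1) * normT z := by
      gcongr
      · exact (l1_mulVec_le hA_nonneg hA_colSum _).trans (l1_le_normT z _)
      · exact l1_le_normT z _
    _ = normT z := by rw [← add_mul, hweights, one_mul]

theorem U_nonexpansive_on_W_general
    (n T : ℕ)
    (A1 A2 : Matrix (Fin n) (Fin n) ℝ)
    (hA1nn : ∀ i j, 0 ≤ A1 i j) (hA1 : ∀ j, ∑ i, A1 i j = 1)
    (hA2nn : ∀ i j, 0 ≤ A2 i j) (hA2 : ∀ j, ∑ i, A2 i j = 1)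
    (z1 z2 : Fin T → Fin n → ℝ) :
    normPair (DApply A1 z1, z2) ≤ normPair (z1, z2) ∧
    normPair (z1, DApply A2 z2) ≤ normPair (z1, z2) :=
  ⟨max_le_max (normT_DApply_le hA1nn (fun j => (hA1 j).le) z1) le_rfl,
    max_le_max le_rfl (normT_DApply_le hA2nn (fun j => (hA2 j).le) z2)⟩

/-- Every matrix of the form `blockdiag(D(A¹), I)` or `blockdiag(I, D(A²))`, with `A¹`, `A²`
entrywise nonnegative column stochastic, is non-expansive on `W` w.r.t. `‖·‖`. -/
theorem U_nonexpansive_on_W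
    (n T : ℕ) (hn : 0 < n) (hT : 0 < T)
    (A1 A2 : Matrix (Fin n) (Fin n) ℝ)
    (hA1nn : ∀ i j, 0 ≤ A1 i j) (hA1 : ∀ j, ∑ i, A1 i j = 1)
    (hA2nn : ∀ i j, 0 ≤ A2 i j) (hA2 : ∀ j, ∑ i, A2 i j = 1)
    (z1 z2 : Fin T → Fin n → ℝ)
    (hz1 : ∀ t, ∑ i, z1 t i = 0) (hz2 : ∀ t, ∑ i, z2 t i = 0) :
    normPair (DApply A1 z1, z2) ≤ normPair (z1, z2) ∧
    normPair (z1, DApply A2 z2) ≤ normPair (z1, z2) :=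
  U_nonexpansive_on_W_general n T A1 A2 hA1nn hA1 hA2nn hA2 z1 z2
end

section
/- Let X₁, …, X_ℓ (ℓ ∈ ℕ₊) be AIMD matrices such that at least one X_g equals the full back-off matrix B = β·I + ((1−β)/n)·e·eᵀ. Then for every nonzero z ∈ ℝⁿ with eᵀz = 0, the strict inequality ‖X_ℓ ⋯ X₂ X₁ z‖₁ < ‖z‖₁ holds. -/
/-- `A` is an AIMD matrix: `A = diag(β̃) + (1/n)·e·(eᵀ − β̃ᵀ)` where each `β̃ᵢ ∈ {β, 1}`. -/
def IsAIMD (n : ℕ) (β : ℝ) (A : Matrix (Fin n) (Fin n) ℝ) : Prop :=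
  ∃ b : Fin n → ℝ, (∀ i, b i = β ∨ b i = 1) ∧
    A = Matrix.diagonal b + (1 / (n : ℝ)) • Matrix.of (fun _ j => 1 - b j)

/-- The full back-off AIMD matrix `B = β·I + ((1−β)/n)·e·eᵀ`. -/
noncomputable def Bmat (n : ℕ) (β : ℝ) : Matrix (Fin n) (Fin n) ℝ :=
  β • (1 : Matrix (Fin n) (Fin n) ℝ) + ((1 - β) / (n : ℝ)) • Matrix.of (fun _ _ => (1 : ℝ))

/-!
Column-stochastic matrices do not increase the `ℓ¹` norm and preserve the hyperplane `eᵀz = 0`,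
on which `B` acts as multiplication by `β`. Every AIMD matrix is column stochastic, so in the
product `X_ℓ ⋯ X₁` the factors applied before `B` keep `z` in that hyperplane without enlarging it, `B`
scales it by `β < 1`, and those applied after it do not enlarge it again.
-/

open Matrix

variable {n : ℕ}

lemma l1_smul {c : ℝ} (hc : 0 ≤ c) (z : Fin n → ℝ) : l1 (c • z) = c * l1 z := by
  simp [l1, Finset.mul_sum, abs_mul, abs_of_nonneg hc]

lemma l1_pos {z : Fin n → ℝ} (hz : z ≠ 0) : 0 < l1 z := by
  obtain ⟨i, hi⟩ := Function.ne_iff.mp hz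
  exact Finset.sum_pos' (fun j _ => abs_nonneg (z j)) ⟨i, Finset.mem_univ i, abs_pos.mpr hi⟩

lemma l1_mulVec_le_of_mem_colStochastic {M : Matrix (Fin n) (Fin n) ℝ}
    (hM : M ∈ colStochastic ℝ (Fin n)) (z : Fin n → ℝ) : l1 (M *ᵥ z) ≤ l1 z := by
  have hrow : ∀ i, |(M *ᵥ z) i| ≤ ∑ j, M i j * |z j| := fun i =>
    calc |∑ j, M i j * z j| ≤ ∑ j, |M i j * z j| := Finset.abs_sum_le_sum_abs _ _
      _ = ∑ j, M i j * |z j| := by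
        simp only [abs_mul, abs_of_nonneg (nonneg_of_mem_colStochastic hM)]
  calc l1 (M *ᵥ z) ≤ ∑ i, ∑ j, M i j * |z j| := Finset.sum_le_sum fun i _ => hrow i
    _ = ∑ j, (∑ i, M i j) * |z j| := by
      rw [Finset.sum_comm]
      simp only [Finset.sum_mul]
    _ = l1 z := by simp [sum_col_of_mem_colStochastic hM, l1]

lemma IsAIMD.mem_colStochastic {β : ℝ} (hβ0 : 0 ≤ β) (hβ1 : β ≤ 1)
    {A : Matrix (Fin n) (Fin n) ℝ} (hA : IsAIMD n β A) : A ∈ colStochastic ℝ (Fin n) := by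
  obtain ⟨b, hb, rfl⟩ := hA
  have hb0 : ∀ j, 0 ≤ b j := fun j => by rcases hb j with h | h <;> linarith
  have hb1 : ∀ j, b j ≤ 1 := fun j => by rcases hb j with h | h <;> linarith
  rw [mem_colStochastic_iff_sum]
  simp only [Matrix.add_apply, diagonal_apply, Matrix.smul_apply, of_apply, smul_eq_mul]
  refine ⟨fun i j => add_nonneg ?_ (mul_nonneg (by positivity) (by linarith [hb1 j])), fun j => ?_⟩
  · split_ifs
    exacts [hb0 i, le_rfl]
  · have hn : (n : ℝ) ≠ 0 := Nat.cast_ne_zero.mpr (Fin.pos j).ne'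
    rw [Finset.sum_add_distrib, Finset.sum_ite_eq' Finset.univ j b]
    simp only [Finset.mem_univ, if_true, Finset.sum_const, Finset.card_univ, Fintype.card_fin,
      nsmul_eq_mul]
    field_simp
    ring

lemma Bmat_mulVec_of_sum_eq_zero {β : ℝ} {z : Fin n → ℝ} (hz : ∑ i, z i = 0) :
    Bmat n β *ᵥ z = β • z := by
  have hones : (of fun (_ _ : Fin n) => (1 : ℝ)) *ᵥ z = 0 := by
    ext i
    simp [mulVec, dotProduct, hz]
  rw [Bmat, add_mulVec, smul_mulVec, smul_mulVec, one_mulVec, hones, smul_zero, add_zero]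

lemma l1_list_prod_mulVec_le_of_Bmat_mem {β : ℝ} (hβ : 0 ≤ β)
    {L : List (Matrix (Fin n) (Fin n) ℝ)} (hL : ∀ A ∈ L, A ∈ colStochastic ℝ (Fin n))
    (hB : Bmat n β ∈ L) {z : Fin n → ℝ} (hz : ∑ i, z i = 0) :
    l1 (L.prod *ᵥ z) ≤ β * l1 z := by
  obtain ⟨s, t, rfl⟩ := List.append_of_mem hB
  have hs : s.prod ∈ colStochastic ℝ (Fin n) :=
    Submonoid.list_prod_mem _ fun A hA => hL A (by simp [hA])
  have ht : t.prod ∈ colStochastic ℝ (Fin n) :=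
    Submonoid.list_prod_mem _ fun A hA => hL A (by simp [hA])
  have htz : ∑ i, (t.prod *ᵥ z) i = 0 := by rw [sum_mulVec_of_mem_colStochastic ht, hz]
  rw [List.prod_append, List.prod_cons, ← mulVec_mulVec, ← mulVec_mulVec]
  calc l1 (s.prod *ᵥ (Bmat n β *ᵥ (t.prod *ᵥ z))) ≤ l1 (Bmat n β *ᵥ (t.prod *ᵥ z)) :=
        l1_mulVec_le_of_mem_colStochastic hs _
    _ = β * l1 (t.prod *ᵥ z) := by rw [Bmat_mulVec_of_sum_eq_zero htz, l1_smul hβ]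
    _ ≤ β * l1 z := mul_le_mul_of_nonneg_left (l1_mulVec_le_of_mem_colStochastic ht z) hβ

theorem prod_aimd_with_backoff_strict_contraction_general
    (n : ℕ) (β : ℝ) (hβ0 : 0 < β) (hβ1 : β < 1)
    (l : ℕ) (X : Fin l → Matrix (Fin n) (Fin n) ℝ)
    (hX : ∀ g, IsAIMD n β (X g))
    (hB : ∃ g, X g = Bmat n β)
    (z : Fin n → ℝ) (hz0 : z ≠ 0) (hzsum : ∑ i, z i = 0) :
    l1 ((List.ofFn X).reverse.prod.mulVec z) < l1 z := by
  have hcol : ∀ A ∈ (List.ofFn X).reverse, A ∈ colStochastic ℝ (Fin n) := by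
    intro A hA
    obtain ⟨g, rfl⟩ := List.mem_ofFn.mp (List.mem_reverse.mp hA)
    exact (hX g).mem_colStochastic hβ0.le hβ1.le
  have hBmem : Bmat n β ∈ (List.ofFn X).reverse :=
    List.mem_reverse.mpr (List.mem_ofFn.mpr hB)
  calc l1 ((List.ofFn X).reverse.prod *ᵥ z) ≤ β * l1 z :=
        l1_list_prod_mulVec_le_of_Bmat_mem hβ0.le hcol hBmem hzsum
    _ < l1 z := mul_lt_of_lt_one_left (l1_pos hz0) hβ1

/-- If `X₁, …, X_ℓ` are AIMD matrices with at least one equal to the full back-off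
matrix `B`, then `‖X_ℓ ⋯ X₂ X₁ z‖₁ < ‖z‖₁` for every nonzero `z` with `eᵀz = 0`. -/
theorem prod_aimd_with_backoff_strict_contraction
    (n : ℕ) (hn : 0 < n) (β : ℝ) (hβ0 : 0 < β) (hβ1 : β < 1)
    (l : ℕ) (hl : 0 < l) (X : Fin l → Matrix (Fin n) (Fin n) ℝ)
    (hX : ∀ g, IsAIMD n β (X g))
    (hB : ∃ g, X g = Bmat n β)
    (z : Fin n → ℝ) (hz0 : z ≠ 0) (hzsum : ∑ i, z i = 0) :
    l1 ((List.ofFn X).reverse.prod.mulVec z) < l1 z :=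
  prod_aimd_with_backoff_strict_contraction_general n β hβ0 hβ1 l X hX hB z hz0 hzsum
end
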